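/- arXiv:2511.13538 — 2 statements merged into one kernel-verified Lean document; each statement's English description precedes it below -/
import Mathlib

section
/- The function Q(x) = (3 sech²(2x))^{1/4} is smooth, positive, even, tends to 0 as |x| → ∞, and satisfies −Q''(x) + Q(x) − Q(x)⁵ = 0 for all x ∈ ℝ. Moreover it is the unique positive solution up to translation: if φ : ℝ → ℝ is twice continuously differentiable, positive, satisfies φ(x) → 0 as |x| → ∞ and −φ'' + φ − φ⁵ = 0 on ℝ, then there exists x₀ ∈ ℝ with φ(x) = Q(x − x₀) for all x. -/
open MeasureTheory Real Set Filter

/-- The ground state of the quintic gKdV equation: `Q x = (3 sech²(2x))^(1/4)`. -/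
noncomputable def Q (x : ℝ) : ℝ := (3 * (Real.cosh (2*x))⁻¹ ^ 2) ^ (1/4 : ℝ)

/-!
Since `Q⁴ = 3 sech²(2x)`, one finds `Q' = -tanh(2x) Q` and
`Q'' = (tanh²(2x) - 2 sech²(2x)) Q = Q - Q⁵`.

For uniqueness, the energy `φ'² - φ² + φ⁶/3` of a solution is conserved. As `x → ∞` it is the
limit of `φ'²`, and `φ → 0` forces `φ'` to take values tending to `0` (mean value theorem), so the
energy vanishes. At a maximum `x₀` of `φ` we get `φ'(x₀) = 0`, hence `φ(x₀)⁴ = 3 = Q(0)⁴`, and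
uniqueness for the `C¹` system `(p, q)' = (q, p - p⁵)` gives `φ = Q(· - x₀)`.
-/

open Topology

theorem ODE_solution_unique_univ_of_contDiff {E : Type*} [NormedAddCommGroup E] [NormedSpace ℝ E]
    {v : E → E} (hv : ContDiff ℝ 1 v) {f g : ℝ → E}
    (hf : ∀ t, HasDerivAt f (v (f t)) t) (hg : ∀ t, HasDerivAt g (v (g t)) t) {t₀ : ℝ}
    (h : f t₀ = g t₀) : f = g := by
  ext t
  obtain ⟨a, b, ht, ht₀⟩ : ∃ a b, t ∈ Ioo a b ∧ t₀ ∈ Ioo a b :=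
    ⟨min t t₀ - 1, max t t₀ + 1, by grind, by grind⟩
  have hfc : Continuous f := continuous_iff_continuousAt.2 fun t => (hf t).continuousAt
  have hgc : Continuous g := continuous_iff_continuousAt.2 fun t => (hg t).continuousAt
  -- `v` is Lipschitz on the compact set swept out by both curves over `[a, b]`
  set s := f '' Icc a b ∪ g '' Icc a b
  obtain ⟨K, hK⟩ : ∃ K, LipschitzOnWith K v s :=
    hv.locallyLipschitz.locallyLipschitzOn.exists_lipschitzOnWith_of_compact
      ((isCompact_Icc.image hfc).union (isCompact_Icc.image hgc))
  exact ODE_solution_unique_of_mem_Ioo (v := fun _ => v) (s := fun _ => s) (fun _ _ => hK) ht₀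
    (fun u hu => ⟨hf u, .inl ⟨u, Ioo_subset_Icc_self hu, rfl⟩⟩)
    (fun u hu => ⟨hg u, .inr ⟨u, Ioo_subset_Icc_self hu, rfl⟩⟩) h ht

theorem eq_zero_of_tendsto_of_tendsto_sq {f f' : ℝ → ℝ} (hf : ∀ x, HasDerivAt f (f' x) x)
    {L a : ℝ} (hL : Tendsto f atTop (𝓝 L)) (ha : Tendsto (fun x => f' x ^ 2) atTop (𝓝 a)) :
    a = 0 := by
  have hmvt : ∀ x, ∃ ξ ∈ Ioo x (x + 1), f' ξ = f (x + 1) - f x := fun x => by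
    simpa using exists_hasDerivAt_eq_slope f f' (lt_add_one x)
      (continuous_iff_continuousAt.2 fun t => (hf t).continuousAt).continuousOn
      (fun t _ => hf t)
  choose ξ hξ hξf using hmvt
  have hξtop : Tendsto ξ atTop atTop :=
    tendsto_atTop_mono (fun x => (hξ x).1.le) tendsto_id
  have hslope : Tendsto (fun x => (f (x + 1) - f x) ^ 2) atTop (𝓝 0) := by
    simpa using ((hL.comp (tendsto_atTop_add_const_right _ 1 tendsto_id)).sub hL).pow 2
  refine tendsto_nhds_unique (ha.comp hξtop) ?_
  simpa [Function.comp_def, hξf] using hslope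

namespace Real

theorem hasDerivAt_tanh (x : ℝ) : HasDerivAt tanh (1 / cosh x ^ 2) x := by
  have h := (hasDerivAt_sinh x).div (hasDerivAt_cosh x) (cosh_pos x).ne'
  rw [show tanh = sinh / cosh from funext tanh_eq_sinh_div_cosh]
  refine h.congr_deriv ?_
  field_simp
  linear_combination cosh_sq x

theorem tendsto_cosh_atTop : Tendsto cosh atTop atTop := by
  refine tendsto_atTop_mono (fun x => ?_) (tendsto_exp_atTop.atTop_div_const two_pos)
  rw [cosh_eq]
  linarith [exp_pos (-x)]

end Real

noncomputable def Q' (x : ℝ) : ℝ := -(tanh (2 * x) * Q x)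

lemma Q_pos (x : ℝ) : 0 < Q x := by
  have := cosh_pos (2 * x)
  unfold Q
  positivity

lemma Q_neg (x : ℝ) : Q (-x) = Q x := by
  rw [Q, Q, mul_neg, cosh_neg]

lemma Q_pow_four (x : ℝ) : Q x ^ 4 = 3 / cosh (2 * x) ^ 2 := by
  rw [Q, ← rpow_natCast, ← rpow_mul (by positivity)]
  norm_num [div_eq_mul_inv]

lemma Q'_zero : Q' 0 = 0 := by simp [Q']

lemma contDiff_Q : ContDiff ℝ ⊤ Q := by
  have hcosh : ContDiff ℝ ⊤ fun x : ℝ => cosh (2 * x) := contDiff_cosh.comp (by fun_prop)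
  refine (contDiff_const.mul ((hcosh.inv fun x => (cosh_pos _).ne').pow 2)).rpow_const_of_ne
    fun x => ?_
  have := cosh_pos (2 * x)
  exact (by positivity : (0 : ℝ) < 3 * (cosh (2 * x))⁻¹ ^ 2).ne'

lemma tendsto_Q_atTop : Tendsto Q atTop (𝓝 0) := by
  have h : Tendsto (fun c : ℝ => (3 * c⁻¹ ^ 2) ^ (1/4 : ℝ)) atTop (𝓝 0) := by
    simpa using ((tendsto_inv_atTop_zero.pow 2).const_mul 3).rpow_const
      (p := 1/4) (Or.inr (by norm_num))
  exact h.comp (tendsto_cosh_atTop.comp (tendsto_id.const_mul_atTop two_pos))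

lemma tendsto_Q_atBot : Tendsto Q atBot (𝓝 0) := by
  simpa [Function.comp_def, Q_neg] using tendsto_Q_atTop.comp tendsto_neg_atBot_atTop

lemma hasDerivAt_Q (x : ℝ) : HasDerivAt Q (Q' x) x := by
  have hc := (cosh_pos (2 * x)).ne'
  have hcosh : HasDerivAt (fun y => cosh (2 * y)) (sinh (2 * x) * 2) x :=
    (hasDerivAt_cosh _).comp x (hasDerivAt_const_mul 2)
  have hu := ((hcosh.fun_inv hc).fun_pow 2).const_mul 3
  refine (hu.rpow_const (p := 1/4) (Or.inl (by positivity))).congr_deriv ?_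
  rw [rpow_sub_one (by positivity), Q', tanh_eq_sinh_div_cosh]
  simp only [Q]
  norm_num
  field_simp
  ring

lemma hasDerivAt_Q' (x : ℝ) : HasDerivAt Q' (Q x - Q x ^ 5) x := by
  have ht : HasDerivAt (fun y => tanh (2 * y)) (1 / cosh (2 * x) ^ 2 * 2) x :=
    (hasDerivAt_tanh _).comp x (hasDerivAt_const_mul 2)
  refine (ht.mul (hasDerivAt_Q x)).neg.congr_deriv ?_
  have hc := (cosh_pos (2 * x)).ne'
  have h4 : Q x ^ 4 * cosh (2 * x) ^ 2 = 3 := by rw [Q_pow_four]; field_simp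
  rw [Q', tanh_eq_sinh_div_cosh]
  field_simp
  linear_combination Q x * h4 - Q x * cosh_sq (2 * x)

lemma iteratedDeriv_two_Q (x : ℝ) : iteratedDeriv 2 Q x = Q x - Q x ^ 5 := by
  rw [iteratedDeriv_succ, iteratedDeriv_one, funext fun y => (hasDerivAt_Q y).deriv,
    (hasDerivAt_Q' x).deriv]

/-- `φ' = ψ`, `ψ' = φ - φ⁵`: the equation `-φ'' + φ - φ⁵ = 0` as a first-order system. -/
structure SolvesQuinticSystem (φ ψ : ℝ → ℝ) : Prop where
  hasDerivAt_fst : ∀ x, HasDerivAt φ (ψ x) x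
  hasDerivAt_snd : ∀ x, HasDerivAt ψ (φ x - φ x ^ 5) x

lemma solvesQuinticSystem_Q : SolvesQuinticSystem Q Q' := ⟨hasDerivAt_Q, hasDerivAt_Q'⟩

lemma solvesQuinticSystem_deriv {φ : ℝ → ℝ} (hφ : ContDiff ℝ 2 φ)
    (hode : ∀ x, -iteratedDeriv 2 φ x + φ x - φ x ^ 5 = 0) :
    SolvesQuinticSystem φ (deriv φ) := by
  have hφ2 : ContDiff ℝ (1 + 1) φ := hφ
  have hdiff : Differentiable ℝ (deriv φ) :=
    (contDiff_succ_iff_deriv.mp hφ2).2.2.differentiable one_ne_zero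
  refine ⟨fun x => (hφ.differentiable two_ne_zero x).hasDerivAt, fun x => ?_⟩
  have h := hode x
  rw [iteratedDeriv_succ, iteratedDeriv_one] at h
  exact (hdiff x).hasDerivAt.congr_deriv (by linarith)

namespace SolvesQuinticSystem

variable {φ ψ : ℝ → ℝ} (h : SolvesQuinticSystem φ ψ)
include h

lemma comp_sub_const (x₀ : ℝ) :
    SolvesQuinticSystem (fun x => φ (x - x₀)) (fun x => ψ (x - x₀)) :=
  ⟨fun x => (h.hasDerivAt_fst (x - x₀)).comp_sub_const x x₀,
    fun x => (h.hasDerivAt_snd (x - x₀)).comp_sub_const x x₀⟩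

lemma eq_of_eq {φ₁ ψ₁ : ℝ → ℝ} (h₁ : SolvesQuinticSystem φ₁ ψ₁) {x₀ : ℝ}
    (hφ : φ x₀ = φ₁ x₀) (hψ : ψ x₀ = ψ₁ x₀) : φ = φ₁ := by
  have hv : ContDiff ℝ 1 fun p : ℝ × ℝ => (p.2, p.1 - p.1 ^ 5) := by fun_prop
  have key := ODE_solution_unique_univ_of_contDiff hv
    (fun t => (h.hasDerivAt_fst t).prodMk (h.hasDerivAt_snd t))
    (fun t => (h₁.hasDerivAt_fst t).prodMk (h₁.hasDerivAt_snd t)) (Prod.ext hφ hψ)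
  exact funext fun x => congrArg Prod.fst (congrFun key x)

lemma hasDerivAt_energy (x : ℝ) :
    HasDerivAt (fun y => ψ y ^ 2 - φ y ^ 2 + φ y ^ 6 / 3) 0 x := by
  have hφ := h.hasDerivAt_fst x
  have hE := (((h.hasDerivAt_snd x).pow 2).sub (hφ.pow 2)).add ((hφ.pow 6).div_const 3)
  refine hE.congr_deriv ?_
  push_cast
  ring

lemma energy_eq_zero (hL : Tendsto φ atTop (𝓝 0)) (x : ℝ) :
    ψ x ^ 2 - φ x ^ 2 + φ x ^ 6 / 3 = 0 := by
  obtain ⟨C, hC⟩ : ∃ C, ∀ y, ψ y ^ 2 = C + φ y ^ 2 - φ y ^ 6 / 3 :=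
    ⟨ψ x ^ 2 - φ x ^ 2 + φ x ^ 6 / 3, fun y => by
      have := is_const_of_deriv_eq_zero (fun y => (h.hasDerivAt_energy y).differentiableAt)
        (fun y => (h.hasDerivAt_energy y).deriv) y x
      linarith⟩
  have hC0 : C = 0 := eq_zero_of_tendsto_of_tendsto_sq h.hasDerivAt_fst hL <| by
    simp_rw [hC]
    simpa using ((hL.pow 2).const_add C).sub ((hL.pow 6).div_const 3)
  linarith [hC x]

lemma exists_eq_Q_sub (hpos : ∀ x, 0 < φ x) (htop : Tendsto φ atTop (𝓝 0))
    (hbot : Tendsto φ atBot (𝓝 0)) :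
    ∃ x₀, ∀ x, φ x = Q (x - x₀) := by
  obtain ⟨x₀, hmax⟩ : ∃ x₀, ∀ x, φ x ≤ φ x₀ := by
    refine (continuous_iff_continuousAt.2 fun x => (h.hasDerivAt_fst x).continuousAt)
      |>.exists_forall_ge' 0 ?_
    rw [cocompact_eq_atBot_atTop, eventually_sup]
    exact ⟨(hbot.eventually (eventually_lt_nhds (hpos 0))).mono fun _ => le_of_lt,
      (htop.eventually (eventually_lt_nhds (hpos 0))).mono fun _ => le_of_lt⟩
  have hψ : ψ x₀ = 0 := IsLocalMax.hasDerivAt_eq_zero (.of_forall hmax) (h.hasDerivAt_fst x₀)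
  have hφ : φ x₀ = Q 0 := by
    have hE := h.energy_eq_zero htop x₀
    have h4 : φ x₀ ^ 2 * (φ x₀ ^ 4 - 3) = 0 := by rw [hψ] at hE; linear_combination 3 * hE
    have h4' : φ x₀ ^ 4 = Q 0 ^ 4 := by
      rw [show Q 0 ^ 4 = 3 by simp [Q_pow_four]]
      linarith [(mul_eq_zero.1 h4).resolve_left (pow_ne_zero 2 (hpos x₀).ne')]
    exact (pow_left_inj₀ (hpos x₀).le (Q_pos 0).le four_ne_zero).1 h4'
  refine ⟨x₀, congrFun (h.eq_of_eq (solvesQuinticSystem_Q.comp_sub_const x₀) (x₀ := x₀) ?_ ?_)⟩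
  all_goals simp [hφ, hψ, Q'_zero]

end SolvesQuinticSystem

/-- `Q` is smooth, positive, even, vanishes at infinity and solves `−Q'' + Q − Q⁵ = 0`;
moreover it is the unique such positive solution up to translation. -/
theorem Q_ground_state_unique :
    ContDiff ℝ (⊤ : ℕ∞) Q ∧
    (∀ x, 0 < Q x) ∧
    (∀ x, Q (-x) = Q x) ∧
    Tendsto Q atTop (nhds 0) ∧ Tendsto Q atBot (nhds 0) ∧
    (∀ x, -iteratedDeriv 2 Q x + Q x - Q x ^ 5 = 0) ∧
    (∀ φ : ℝ → ℝ, ContDiff ℝ 2 φ → (∀ x, 0 < φ x) →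
      Tendsto φ atTop (nhds 0) → Tendsto φ atBot (nhds 0) →
      (∀ x, -iteratedDeriv 2 φ x + φ x - φ x ^ 5 = 0) →
      ∃ x₀ : ℝ, ∀ x, φ x = Q (x - x₀)) :=
  ⟨contDiff_Q.of_le le_top, Q_pos, Q_neg, tendsto_Q_atTop, tendsto_Q_atBot,
    fun x => by rw [iteratedDeriv_two_Q]; ring,
    fun _ hφ hpos htop hbot hode =>
      (solvesQuinticSystem_deriv hφ hode).exists_eq_Q_sub hpos htop hbot⟩
end

section
/- Characterization of the kernel of the linearized operator: if f : ℝ → ℝ is twice continuously differentiable, f ∈ L²(ℝ), and Lf = 0 pointwise on ℝ (i.e. −f'' + f − 5Q⁴ f = 0), then there exists a ∈ ℝ such that f = a Q'. -/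
open MeasureTheory Real Set Filter

/-!
Both `f` and `Q'` solve the linear equation `u'' = (1 - 5 Q⁴) u`, so their Wronskian
`W = f Q'' - f' Q'` is constant. If `W ≠ 0`, then `(f / Q')' = -W / Q'²`, and since `Q'` decays
exactly like `e^{-t}` this forces `|f t| ≳ e^t` as `t → ∞`, contradicting `f ∈ L²`.
If `W = 0`, evaluating at `0`, where `Q'(0) = 0 ≠ Q''(0)`, shows that `f` and `a Q'` have the
same Cauchy data at `0` for `a = f'(0) / Q''(0)`; the coefficient `1 - 5 Q⁴` is bounded, so the
equation is globally Lipschitz and the two solutions coincide.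
-/

open scoped NNReal Topology

section LinearODE

variable {p u u' v v' : ℝ → ℝ}

theorem wronskian_eq_of_hasDerivAt
    (hu : ∀ t, HasDerivAt u (u' t) t) (hu' : ∀ t, HasDerivAt u' (p t * u t) t)
    (hv : ∀ t, HasDerivAt v (v' t) t) (hv' : ∀ t, HasDerivAt v' (p t * v t) t) (t s : ℝ) :
    u t * v' t - u' t * v t = u s * v' s - u' s * v s := by
  have hW : ∀ t, HasDerivAt (fun t => u t * v' t - u' t * v t) 0 t := fun t =>
    (((hu t).mul (hv' t)).sub ((hu' t).mul (hv t))).congr_deriv (by ring)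
  exact is_const_of_deriv_eq_zero (fun t => (hW t).differentiableAt) (fun t => (hW t).deriv) t s

theorem eq_of_hasDerivAt_of_abs_le {K : ℝ≥0} (hp : ∀ t, |p t| ≤ K)
    (hu : ∀ t, HasDerivAt u (u' t) t) (hu' : ∀ t, HasDerivAt u' (p t * u t) t)
    (hv : ∀ t, HasDerivAt v (v' t) t) (hv' : ∀ t, HasDerivAt v' (p t * v t) t)
    {t₀ : ℝ} (h₀ : u t₀ = v t₀) (h₀' : u' t₀ = v' t₀) : u = v := by
  have hlip (t : ℝ) : LipschitzWith (max 1 K) fun x : ℝ × ℝ => (x.2, p t * x.1) := by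
    have hK : ‖p t‖₊ * 1 ≤ K := by
      rw [mul_one, ← NNReal.coe_le_coe, coe_nnnorm, norm_eq_abs]; exact hp t
    exact (LipschitzWith.prod_snd.prodMk
      ((lipschitzWith_smul (p t)).comp LipschitzWith.prod_fst)).weaken (max_le_max le_rfl hK)
  have h := ODE_solution_unique_univ (v := fun t x => (x.2, p t * x.1)) (s := fun _ => univ)
    (f := fun t => (u t, u' t)) (g := fun t => (v t, v' t)) (fun t => (hlip t).lipschitzOnWith)
    (fun t => ⟨(hu t).prodMk (hu' t), trivial⟩) (fun t => ⟨(hv t).prodMk (hv' t), trivial⟩)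
    (Prod.ext h₀ h₀')
  exact funext fun t => congrArg Prod.fst (congrFun h t)

theorem tendsto_abs_atTop_of_wronskian_ne_zero {u u' φ φ' : ℝ → ℝ} {a c C W : ℝ}
    (hu : ∀ t, HasDerivAt u (u' t) t) (hφ : ∀ t, HasDerivAt φ (φ' t) t)
    (hW : ∀ t, u t * φ' t - u' t * φ t = W) (hW0 : W ≠ 0) (hc : 0 < c)
    (hlow : ∀ t ≥ a, c * exp (-t) ≤ |φ t|) (hup : ∀ t ≥ a, |φ t| ≤ C * exp (-t)) :
    Tendsto (fun t => |u t|) atTop atTop := by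
  have hφ0 : ∀ t ≥ a, 0 < |φ t| := fun t ht => (hlow t ht).trans_lt' (by positivity)
  have hC : 0 < C := pos_of_mul_pos_left ((hφ0 a le_rfl).trans_le (hup a le_rfl)) (exp_pos _).le
  -- `(u / φ)' = -W / φ ^ 2` and `φ ^ 2 ≤ C ^ 2 * exp (-2 * t)` make `k` monotone on `[a, ∞)`.
  set k : ℝ → ℝ := fun t => -W * (u t / φ t) - W ^ 2 / (2 * C ^ 2) * exp (2 * t)
  have hk : ∀ t ≥ a, HasDerivAt k (W ^ 2 / φ t ^ 2 - W ^ 2 / C ^ 2 * exp (2 * t)) t := by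
    intro t ht
    have hφt : φ t ≠ 0 := abs_pos.1 (hφ0 t ht)
    have h := (((hu t).div (hφ t) hφt).const_mul (-W)).sub
      (((hasDerivAt_id' t).const_mul 2).exp.const_mul (W ^ 2 / (2 * C ^ 2)))
    refine h.congr_deriv ?_
    rw [← hW t]
    field_simp
    ring
  have hk' : ∀ t ≥ a, 0 ≤ W ^ 2 / φ t ^ 2 - W ^ 2 / C ^ 2 * exp (2 * t) := by
    intro t ht
    have hsq : φ t ^ 2 ≤ C ^ 2 * exp (-(2 * t)) := by
      rw [← sq_abs, show -(2 * t) = -t + -t by ring, exp_add]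
      nlinarith [hφ0 t ht, hup t ht]
    have hφ2 : 0 < φ t ^ 2 := by rw [← sq_abs]; exact pow_pos (hφ0 t ht) 2
    have he : exp (2 * t) * φ t ^ 2 ≤ C ^ 2 := by
      calc exp (2 * t) * φ t ^ 2 ≤ exp (2 * t) * (C ^ 2 * exp (-(2 * t))) :=
            mul_le_mul_of_nonneg_left hsq (exp_pos _).le
        _ = C ^ 2 := by rw [mul_left_comm, ← exp_add]; simp
    rw [sub_nonneg, div_mul_eq_mul_div, div_le_div_iff₀ (by positivity) hφ2]
    nlinarith [mul_le_mul_of_nonneg_left he (sq_nonneg W)]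
  have hmono : MonotoneOn k (Ici a) := by
    refine monotoneOn_of_hasDerivWithinAt_nonneg
      (f' := fun t => W ^ 2 / φ t ^ 2 - W ^ 2 / C ^ 2 * exp (2 * t)) (convex_Ici a)
      (fun t ht => (hk t ht).continuousAt.continuousWithinAt) (fun t ht => ?_) (fun t ht => ?_)
    · exact (hk t (interior_subset ht)).hasDerivWithinAt
    · exact hk' t (interior_subset ht)
  have hbound : ∀ t ≥ a,
      c / |W| * (k a * exp (-t) + W ^ 2 / (2 * C ^ 2) * exp t) ≤ |u t| := by
    intro t ht
    set B := k a + W ^ 2 / (2 * C ^ 2) * exp (2 * t)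
    have hB : B * |φ t| ≤ |W| * |u t| := by
      have hka := hmono self_mem_Ici ht ht
      have hWu : -W * (u t / φ t) ≤ |W| * |u t| / |φ t| := by
        simpa only [abs_mul, abs_neg, abs_div, mul_div_assoc] using le_abs_self (-W * (u t / φ t))
      rw [← le_div_iff₀ (hφ0 t ht)]
      simp only [B, k] at hka ⊢
      linarith
    have hcB : c * exp (-t) * B ≤ |W| * |u t| := by
      rcases le_or_gt 0 B with hB0 | hB0
      · nlinarith [mul_le_mul_of_nonneg_right (hlow t ht) hB0]
      · nlinarith [mul_pos hc (exp_pos (-t)), abs_nonneg W, abs_nonneg (u t)]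
    have he : exp (-t) * exp (2 * t) = exp t := by rw [← exp_add]; ring_nf
    rw [show c / |W| * (k a * exp (-t) + W ^ 2 / (2 * C ^ 2) * exp t) = c * exp (-t) * B / |W| by
      rw [← he]; ring, div_le_iff₀ (abs_pos.2 hW0)]
    linarith
  have hlim : Tendsto (fun t => k a * exp (-t) + W ^ 2 / (2 * C ^ 2) * exp t) atTop atTop := by
    have h0 : Tendsto (fun t => k a * exp (-t)) atTop (𝓝 0) := by
      simpa using (tendsto_exp_neg_atTop_nhds_zero.const_mul (k a))
    exact h0.add_atTop (tendsto_exp_atTop.const_mul_atTop (by positivity))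
  exact tendsto_atTop_mono' atTop (eventually_ge_atTop a |>.mono hbound)
    (hlim.const_mul_atTop (by positivity))

end LinearODE

theorem hasDerivAt_deriv_of_contDiff_two {f : ℝ → ℝ} (hf : ContDiff ℝ 2 f) (x : ℝ) :
    HasDerivAt (deriv f) (iteratedDeriv 2 f x) x := by
  rw [iteratedDeriv_succ, iteratedDeriv_one]
  exact ((contDiff_succ_iff_deriv.1 hf).2.2.differentiable one_ne_zero x).hasDerivAt

theorem not_integrable_of_tendsto_atTop {g : ℝ → ℝ} (hg : Tendsto g atTop atTop) :
    ¬ Integrable g := by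
  intro hint
  obtain ⟨x₀, hx₀⟩ := eventually_atTop.1 (hg.eventually_ge_atTop 1)
  have h1 : IntegrableOn (fun _ => (1 : ℝ)) (Ici x₀) := by
    refine Integrable.mono' hint.integrableOn aestronglyMeasurable_const ?_
    filter_upwards [ae_restrict_mem measurableSet_Ici] with x hx
    rw [norm_one]
    exact hx₀ x hx
  simp [integrableOn_const_iff] at h1

theorem exp_neg_sq_eq_cosh_sub_sinh (x : ℝ) : exp (-x) ^ 2 = cosh (2 * x) - sinh (2 * x) := by
  rw [cosh_sub_sinh, sq, ← exp_add]
  congr 1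
  ring

namespace Q

theorem pos (x : ℝ) : 0 < Q x := by unfold Q; positivity

theorem pow_four (x : ℝ) : Q x ^ 4 = 3 / cosh (2 * x) ^ 2 := by
  rw [Q, ← rpow_natCast, ← rpow_mul (by positivity)]
  norm_num [div_eq_mul_inv]

theorem hasDerivAt (x : ℝ) :
    HasDerivAt Q (-(sinh (2 * x) / cosh (2 * x)) * Q x) x := by
  have hc : cosh (2 * x) ≠ 0 := (cosh_pos _).ne'
  have h := ((((hasDerivAt_id' x).const_mul 2).cosh.fun_inv hc).fun_pow 2).const_mul 3
    |>.rpow_const (p := 1/4) (Or.inl (by positivity))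
  convert h using 1
  · rfl
  rw [rpow_sub_one (by positivity), ← Q]
  norm_num
  field_simp
  ring

theorem deriv_eq : deriv Q = fun x => -(sinh (2 * x) / cosh (2 * x)) * Q x :=
  funext fun x => (hasDerivAt x).deriv

theorem hasDerivAt_deriv (x : ℝ) : HasDerivAt (deriv Q) (Q x - Q x ^ 5) x := by
  have hc : cosh (2 * x) ≠ 0 := (cosh_pos _).ne'
  have h2x := (hasDerivAt_id' x).const_mul 2
  have h := (h2x.sinh.div h2x.cosh hc).neg.mul (hasDerivAt x)
  rw [deriv_eq]
  refine h.congr_deriv ?_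
  have h4 := pow_four x
  have hsq := cosh_sq_sub_sinh_sq (2 * x)
  rw [show Q x ^ 5 = Q x * Q x ^ 4 by ring, h4]
  simp only [Pi.div_apply, Pi.neg_apply]
  field_simp
  linear_combination -3 * Q x * hsq

-- `Q'' = Q - Q⁵` differentiated once more: `Q'` lies in the kernel of `L`.
theorem hasDerivAt_sub_pow_five (x : ℝ) :
    HasDerivAt (fun x => Q x - Q x ^ 5) ((1 - 5 * Q x ^ 4) * deriv Q x) x := by
  have h := (hasDerivAt x).differentiableAt.hasDerivAt
  refine (h.sub (h.fun_pow 5)).congr_deriv ?_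
  norm_num
  ring

theorem le_two_mul_exp_neg (x : ℝ) : Q x ≤ 2 * exp (-x) := by
  refine (pow_le_pow_iff_left₀ (pos x).le (by positivity) four_ne_zero).1 ?_
  have hsq := cosh_sq_sub_sinh_sq (2 * x)
  have hy : (2 * exp (-x)) ^ 4 = 16 * (cosh (2 * x) - sinh (2 * x)) ^ 2 := by
    rw [← exp_neg_sq_eq_cosh_sub_sinh]; ring
  rw [pow_four, hy, div_le_iff₀ (by positivity)]
  nlinarith [sq_nonneg (cosh (2 * x) - sinh (2 * x))]

theorem exp_neg_le {x : ℝ} (hx : 0 ≤ x) : exp (-x) ≤ Q x := by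
  refine (pow_le_pow_iff_left₀ (by positivity) (pos x).le four_ne_zero).1 ?_
  have hs : 0 ≤ sinh (2 * x) := sinh_nonneg_iff.2 (by linarith)
  have hsq := cosh_sq_sub_sinh_sq (2 * x)
  have hy : exp (-x) ^ 4 = (cosh (2 * x) - sinh (2 * x)) ^ 2 := by
    rw [← exp_neg_sq_eq_cosh_sub_sinh]; ring
  have hle : cosh (2 * x) * (cosh (2 * x) - sinh (2 * x)) ≤ 1 := by
    nlinarith [one_le_cosh (2 * x)]
  have hpos : 0 ≤ cosh (2 * x) * (cosh (2 * x) - sinh (2 * x)) := by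
    nlinarith [one_le_cosh (2 * x)]
  rw [pow_four, hy, le_div_iff₀ (by positivity)]
  nlinarith

theorem abs_deriv_eq (x : ℝ) : |deriv Q x| = |sinh (2 * x)| / cosh (2 * x) * Q x := by
  rw [deriv_eq, abs_mul, abs_neg, abs_div, abs_of_pos (cosh_pos _), abs_of_pos (pos x)]

theorem abs_deriv_le (x : ℝ) : |deriv Q x| ≤ 2 * exp (-x) := by
  have hsum := cosh_add_sinh (2 * x)
  have hdiff := cosh_sub_sinh (2 * x)
  have hsinh : |sinh (2 * x)| ≤ cosh (2 * x) :=
    abs_le.2 ⟨by linarith [exp_pos (2 * x)], by linarith [exp_pos (-(2 * x))]⟩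
  calc |deriv Q x| ≤ 1 * Q x := by
        rw [abs_deriv_eq]
        exact mul_le_mul_of_nonneg_right (div_le_one_of_le₀ hsinh (cosh_pos _).le) (pos x).le
    _ ≤ 2 * exp (-x) := by rw [one_mul]; exact le_two_mul_exp_neg x

theorem inv_two_mul_exp_neg_le_abs_deriv {x : ℝ} (hx : 1 ≤ x) : 2⁻¹ * exp (-x) ≤ |deriv Q x| := by
  have hsum := cosh_add_sinh (2 * x)
  have hdiff := cosh_sub_sinh (2 * x)
  have hprod : exp (2 * x) * exp (-(2 * x)) = 1 := by rw [← exp_add]; simp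
  have hbig : 3 ≤ exp (2 * x) := by linarith [add_one_le_exp (2 * x)]
  have hsinh : cosh (2 * x) / 2 ≤ |sinh (2 * x)| :=
    (le_abs_self _).trans' (by nlinarith [exp_pos (-(2 * x))])
  have hhalf : 2⁻¹ ≤ |sinh (2 * x)| / cosh (2 * x) := by
    rw [le_div_iff₀ (cosh_pos _)]; linarith
  calc 2⁻¹ * exp (-x) ≤ |sinh (2 * x)| / cosh (2 * x) * Q x :=
        mul_le_mul hhalf (exp_neg_le (by linarith)) (by positivity) (by positivity)
    _ = |deriv Q x| := (abs_deriv_eq x).symm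

theorem deriv_zero : deriv Q 0 = 0 := by simp [deriv_eq]

theorem sub_pow_five_zero_ne_zero : Q 0 - Q 0 ^ 5 ≠ 0 := by
  have h4 : Q 0 ^ 4 = 3 := by simp [pow_four]
  rw [show Q 0 - Q 0 ^ 5 = -2 * Q 0 by linear_combination -(Q 0) * h4]
  exact mul_ne_zero (by norm_num) (pos 0).ne'

theorem abs_one_sub_five_mul_pow_four_le (x : ℝ) : |1 - 5 * Q x ^ 4| ≤ 14 := by
  have h3 : Q x ^ 4 ≤ 3 := by
    rw [pow_four, div_le_iff₀ (by positivity)]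
    nlinarith [one_le_cosh (2 * x)]
  exact abs_le.2 ⟨by linarith, by linarith [pow_nonneg (pos x).le 4]⟩

end Q

/-- Characterization of the kernel of the linearized operator `L = −∂²_y + 1 − 5Q⁴`:
any `C²`, `L²` solution of `Lf = 0` is a multiple of `Q'`. -/
theorem kernel_of_linearized_operator (f : ℝ → ℝ)
    (hreg : ContDiff ℝ 2 f)
    (hL2 : Integrable (fun x => f x ^ 2))
    (hker : ∀ y, -iteratedDeriv 2 f y + f y - 5 * Q y ^ 4 * f y = 0) :
    ∃ a : ℝ, ∀ y, f y = a * deriv Q y := by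
  set p : ℝ → ℝ := fun y => 1 - 5 * Q y ^ 4
  have hf (y : ℝ) : HasDerivAt f (deriv f y) y :=
    (hreg.differentiable (by norm_num) y).hasDerivAt
  have hf' (y : ℝ) : HasDerivAt (deriv f) (p y * f y) y :=
    (hasDerivAt_deriv_of_contDiff_two hreg y).congr_deriv (by linarith [hker y])
  set W := f 0 * (Q 0 - Q 0 ^ 5) - deriv f 0 * deriv Q 0
  have hW (t : ℝ) : f t * (Q t - Q t ^ 5) - deriv f t * deriv Q t = W :=
    wronskian_eq_of_hasDerivAt hf hf' Q.hasDerivAt_deriv Q.hasDerivAt_sub_pow_five t 0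
  by_cases hW0 : W = 0
  · have hf0 : f 0 = 0 := by
      simpa [W, Q.deriv_zero, Q.sub_pow_five_zero_ne_zero] using hW0
    set a := deriv f 0 / (Q 0 - Q 0 ^ 5)
    refine ⟨a, congrFun (eq_of_hasDerivAt_of_abs_le (K := 14) Q.abs_one_sub_five_mul_pow_four_le
      hf hf' (fun t => (Q.hasDerivAt_deriv t).const_mul a)
      (fun t => (Q.hasDerivAt_sub_pow_five t).const_mul a |>.congr_deriv (by ring))
      (t₀ := 0) ?_ ?_)⟩
    · simp [hf0, Q.deriv_zero]
    · exact (div_mul_cancel₀ _ Q.sub_pow_five_zero_ne_zero).symm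
  · have hgrow := tendsto_abs_atTop_of_wronskian_ne_zero (a := 1) hf Q.hasDerivAt_deriv hW hW0
      (by norm_num : (0 : ℝ) < 2⁻¹) (fun _ => Q.inv_two_mul_exp_neg_le_abs_deriv)
      (fun t _ => Q.abs_deriv_le t)
    refine absurd hL2 (not_integrable_of_tendsto_atTop ?_)
    simpa only [Function.comp_def, sq_abs] using (tendsto_pow_atTop two_ne_zero).comp hgrow
end
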